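/- arXiv:1708.06643 — 2 statements merged into one kernel-verified Lean document; each statement's English description precedes it below -/
import Mathlib

section
/- For any two symmetric 3×3 real matrices X, Y and any function μ : ℝ≥0 → ℝ with μ ≥ 0, one has (μ(|X|)·X − μ(|Y|)·Y) : (X − Y) ≥ (μ(|X|)|X| − μ(|Y|)|Y|)·(|X| − |Y|). -/
open scoped NNReal

noncomputable def frob (X Y : Matrix (Fin 3) (Fin 3) ℝ) : ℝ :=
  ∑ i, ∑ j, X i j * Y i j

noncomputable def fnorm (X : Matrix (Fin 3) (Fin 3) ℝ) : ℝ :=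
  Real.sqrt (frob X X)

/-! With `a = μ |X|` and `b = μ |Y|`, the right-hand side minus the left-hand side expands to
`(a + b) (|X| |Y| - X : Y)`, which is nonnegative by Cauchy–Schwarz once `frob` is recognised, through `Matrix.vec`, as the
inner product of `EuclideanSpace ℝ (Fin 3 × Fin 3)`. -/

open scoped RealInnerProductSpace

theorem mul_norm_sub_mul_norm_mul_sub_le_inner {E : Type*} [NormedAddCommGroup E]
    [InnerProductSpace ℝ E] {a b : ℝ} (hab : 0 ≤ a + b) (x y : E) :
    (a * ‖x‖ - b * ‖y‖) * (‖x‖ - ‖y‖) ≤ ⟪a • x - b • y, x - y⟫ := by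
  have expand : ⟪a • x - b • y, x - y⟫ = a * ‖x‖ ^ 2 + b * ‖y‖ ^ 2 - (a + b) * ⟪x, y⟫ := by
    simp only [inner_sub_left, inner_sub_right, real_inner_smul_left, real_inner_self_eq_norm_sq,
      real_inner_comm x y]
    ring
  calc (a * ‖x‖ - b * ‖y‖) * (‖x‖ - ‖y‖)
      = a * ‖x‖ ^ 2 + b * ‖y‖ ^ 2 - (a + b) * (‖x‖ * ‖y‖) := by ring
    _ ≤ a * ‖x‖ ^ 2 + b * ‖y‖ ^ 2 - (a + b) * ⟪x, y⟫ := by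
      gcongr; exact real_inner_le_norm x y
    _ = ⟪a • x - b • y, x - y⟫ := expand.symm

theorem frob_eq_inner (X Y : Matrix (Fin 3) (Fin 3) ℝ) :
    frob X Y = ⟪WithLp.toLp 2 X.vec, WithLp.toLp 2 Y.vec⟫ := by
  rw [EuclideanSpace.inner_toLp_toLp, star_trivial, dotProduct, Fintype.sum_prod_type,
    Finset.sum_comm]
  simp only [frob, Matrix.vec, mul_comm]

theorem fnorm_eq_norm (X : Matrix (Fin 3) (Fin 3) ℝ) : fnorm X = ‖WithLp.toLp 2 X.vec‖ := by
  rw [fnorm, frob_eq_inner, real_inner_self_eq_norm_sq, Real.sqrt_sq (norm_nonneg _)]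

theorem viscosity_lower_bound_general (μ : ℝ≥0 → ℝ) (hμ0 : ∀ s, 0 ≤ μ s)
    (X Y : Matrix (Fin 3) (Fin 3) ℝ) :
    (μ (Real.toNNReal (fnorm X)) * fnorm X - μ (Real.toNNReal (fnorm Y)) * fnorm Y)
        * (fnorm X - fnorm Y)
      ≤ frob (μ (Real.toNNReal (fnorm X)) • X - μ (Real.toNNReal (fnorm Y)) • Y) (X - Y) := by
  simp only [frob_eq_inner, fnorm_eq_norm, Matrix.vec_sub, Matrix.vec_smul, WithLp.toLp_sub,
    WithLp.toLp_smul]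
  exact mul_norm_sub_mul_norm_mul_sub_le_inner (add_nonneg (hμ0 _) (hμ0 _)) _ _

theorem viscosity_lower_bound (μ : ℝ≥0 → ℝ) (hμ0 : ∀ s, 0 ≤ μ s)
    (X Y : Matrix (Fin 3) (Fin 3) ℝ) (hX : X.IsSymm) (hY : Y.IsSymm) :
    (μ (Real.toNNReal (fnorm X)) * fnorm X - μ (Real.toNNReal (fnorm Y)) * fnorm Y)
        * (fnorm X - fnorm Y)
      ≤ frob (μ (Real.toNNReal (fnorm X)) • X - μ (Real.toNNReal (fnorm Y)) • Y) (X - Y) :=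
  viscosity_lower_bound_general μ hμ0 X Y
end

section
/- Let H be a Hilbert space and suppose M : H → H is a monotone map (⟪M x − M y, x − y⟫ ≥ 0 for all x, y) and vₙ ⇀ v weakly in H with limsupₙ ⟪M vₙ, vₙ − v⟫ ≤ 0. If M is also hemicontinuous (for all x, w the map t ↦ ⟪M(x + t w), w⟫ is continuous) and bounded on bounded sets, then for every w ∈ H, liminfₙ ⟪M vₙ, vₙ − w⟫ ≥ ⟪M v, v − w⟫. -/
/-!
Minty's trick. Monotonicity against `v₀` gives `⟪M v₀, vₙ - v₀⟫ ≤ ⟪M vₙ, vₙ - v₀⟫`, and the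
left side tends to `0`, so `⟪M vₙ, vₙ - v₀⟫ → 0`. Testing monotonicity against
`u = v₀ + t (w - v₀)`, `t > 0`, and passing to the limit yields
`t ⟪M u, v₀ - w⟫ ≤ t liminf ⟪M vₙ, vₙ - w⟫`; dividing by `t` and letting `t → 0⁺`
(hemicontinuity) gives the claim. Boundedness of `M` on the weakly convergent, hence bounded,
sequence keeps all the liminfs and limsups finite.
-/

open RealInnerProductSpace

def WeakConv {E : Type*} [NormedAddCommGroup E] [NormedSpace ℝ E]
    (y : ℕ → E) (y₀ : E) : Prop :=
  ∀ f : E →L[ℝ] ℝ, Filter.Tendsto (fun n => f (y n)) Filter.atTop (nhds (f y₀))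

open Filter Topology Bornology Set

namespace WeakConv

/-- Uniform boundedness applied in the bidual, which is complete even when `E` is not. -/
theorem isBounded_range {E : Type*} [NormedAddCommGroup E] [NormedSpace ℝ E] {v : ℕ → E} {v₀ : E}
    (hconv : WeakConv v v₀) : IsBounded (range v) := by
  have hpt : ∀ f : StrongDual ℝ E, ∃ C, ∀ n, ‖NormedSpace.inclusionInDoubleDual ℝ E (v n) f‖ ≤ C :=
    fun f => (Metric.isBounded_range_of_tendsto _ (hconv f)).exists_norm_le.imp
      fun _ hC n => hC _ (mem_range_self n)
  obtain ⟨C, hC⟩ := banach_steinhaus hpt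
  refine isBounded_iff_forall_norm_le.2 ⟨C, ?_⟩
  rintro _ ⟨n, rfl⟩
  rw [← (NormedSpace.inclusionInDoubleDualLi ℝ).norm_map (v n)]
  exact hC n

theorem tendsto_inner_sub {H : Type*} [NormedAddCommGroup H] [InnerProductSpace ℝ H]
    {v : ℕ → H} {v₀ : H} (hconv : WeakConv v v₀) (z y : H) :
    Tendsto (fun n => ⟪z, v n - y⟫) atTop (𝓝 ⟪z, v₀ - y⟫) := by
  have hz : Tendsto (fun n => ⟪z, v n⟫) atTop (𝓝 ⟪z, v₀⟫) := hconv (innerSL ℝ z)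
  simpa only [inner_sub_right] using hz.sub_const ⟪z, y⟫

end WeakConv

theorem tendsto_of_le_of_limsup_nonpos {ι : Type*} {f : Filter ι} [f.NeBot] {a b : ι → ℝ}
    (hb : Tendsto b f (𝓝 0)) (hba : ∀ᶠ i in f, b i ≤ a i) (ha : IsBoundedUnder (· ≤ ·) f a)
    (hlim : limsup a f ≤ 0) : Tendsto a f (𝓝 0) :=
  tendsto_of_le_liminf_of_limsup_le (hb.liminf_eq ▸ liminf_le_liminf hba hb.isBoundedUnder_ge
    ha.isCoboundedUnder_ge) hlim ha (hb.isBoundedUnder_ge.mono_ge hba)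

section InnerProductSpace

variable {H : Type*} [NormedAddCommGroup H] [InnerProductSpace ℝ H]

theorem isBounded_range_inner {ι : Type*} {x y : ι → H} (hx : IsBounded (range x))
    (hy : IsBounded (range y)) : IsBounded (range fun i => ⟪x i, y i⟫) := by
  obtain ⟨Cx, hCx⟩ := hx.exists_norm_le
  obtain ⟨Cy, hCy⟩ := hy.exists_norm_le
  refine isBounded_iff_forall_norm_le.2 ⟨Cx * Cy, ?_⟩
  rintro _ ⟨i, rfl⟩
  calc ‖⟪x i, y i⟫‖ ≤ ‖x i‖ * ‖y i‖ := norm_inner_le_norm _ _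
    _ ≤ Cx * Cy := mul_le_mul (hCx _ ⟨i, rfl⟩) (hCy _ ⟨i, rfl⟩) (norm_nonneg _)
        ((norm_nonneg _).trans (hCx _ ⟨i, rfl⟩))

theorem inner_sub_le_of_monotone {M : H → H} (hmono : ∀ x y : H, 0 ≤ ⟪M x - M y, x - y⟫)
    (x y : H) : ⟪M y, x - y⟫ ≤ ⟪M x, x - y⟫ :=
  sub_nonneg.1 (by simpa only [inner_sub_left] using hmono x y)

theorem mul_inner_sub_eq (z x v₀ w : H) (t : ℝ) :
    t * ⟪z, x - w⟫ = ⟪z, x - (v₀ + t • (w - v₀))⟫ + (t - 1) * ⟪z, x - v₀⟫ := by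
  have hsplit : t • (x - w) = (x - (v₀ + t • (w - v₀))) + (t - 1) • (x - v₀) := by module
  rw [← real_inner_smul_right z, hsplit, inner_add_right, real_inner_smul_right]

theorem inner_le_liminf_of_monotone {M : H → H} (hmono : ∀ x y : H, 0 ≤ ⟪M x - M y, x - y⟫)
    {v : ℕ → H} {v₀ : H} (hconv : WeakConv v v₀)
    (ha : Tendsto (fun n => ⟪M (v n), v n - v₀⟫) atTop (𝓝 0)) {w : H}
    (hd : IsCoboundedUnder (· ≥ ·) atTop fun n => ⟪M (v n), v n - w⟫) {t : ℝ} (ht : 0 < t) :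
    ⟪M (v₀ + t • (w - v₀)), v₀ - w⟫ ≤ liminf (fun n => ⟪M (v n), v n - w⟫) atTop := by
  set u := v₀ + t • (w - v₀)
  set g : ℕ → ℝ := fun n => t⁻¹ * (⟪M u, v n - u⟫ + (t - 1) * ⟪M (v n), v n - v₀⟫)
  have hg_le : ∀ n, g n ≤ ⟪M (v n), v n - w⟫ := fun n => by
    rw [inv_mul_le_iff₀ ht, mul_inner_sub_eq _ _ v₀ w t]
    linarith [inner_sub_le_of_monotone hmono (v n) u]
  have hg : Tendsto g atTop (𝓝 ⟪M u, v₀ - w⟫) := by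
    have hu : v₀ - u = t • (v₀ - w) := by module
    have hlim := ((hconv.tendsto_inner_sub (M u) u).add (ha.const_mul (t - 1))).const_mul t⁻¹
    rwa [mul_zero, add_zero, hu, real_inner_smul_right, inv_mul_cancel_left₀ ht.ne'] at hlim
  calc ⟪M u, v₀ - w⟫ = liminf g atTop := hg.liminf_eq.symm
    _ ≤ _ := liminf_le_liminf (.of_forall hg_le) hg.isBoundedUnder_ge hd

end InnerProductSpace

theorem pseudomonotone_of_monotone_general {H : Type*} [NormedAddCommGroup H]
    [InnerProductSpace ℝ H]
    (M : H → H)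
    (hmono : ∀ x y : H, 0 ≤ ⟪M x - M y, x - y⟫)
    (hhemi : ∀ x w : H, Continuous fun t : ℝ => ⟪M (x + t • w), w⟫)
    (hbdd : ∀ S : Set H, Bornology.IsBounded S → Bornology.IsBounded (M '' S))
    (v : ℕ → H) (v₀ : H) (hconv : WeakConv v v₀)
    (hlimsup : Filter.limsup (fun n => ⟪M (v n), v n - v₀⟫) Filter.atTop ≤ 0) :
    ∀ w : H, ⟪M v₀, v₀ - w⟫ ≤ Filter.liminf (fun n => ⟪M (v n), v n - w⟫) Filter.atTop := by
  intro w
  have hv : IsBounded (range v) := hconv.isBounded_range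
  have hMv : IsBounded (range (M ∘ v)) := range_comp M v ▸ hbdd _ hv
  have hbounded : ∀ y, IsBounded (range fun n => ⟪M (v n), v n - y⟫) := fun y =>
    isBounded_range_inner hMv ((hv.sub isBounded_singleton).subset <| by
      rintro _ ⟨n, rfl⟩; exact sub_mem_sub (mem_range_self n) rfl)
  have ha : Tendsto (fun n => ⟪M (v n), v n - v₀⟫) atTop (𝓝 0) :=
    tendsto_of_le_of_limsup_nonpos (by simpa using hconv.tendsto_inner_sub (M v₀) v₀)
      (.of_forall fun n => inner_sub_le_of_monotone hmono (v n) v₀)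
      (hbounded v₀).bddAbove.isBoundedUnder_of_range hlimsup
  have hsegment : Continuous fun t : ℝ => ⟪M (v₀ + t • (w - v₀)), v₀ - w⟫ := by
    refine (hhemi v₀ (w - v₀)).neg.congr fun t => ?_
    rw [Pi.neg_apply, ← inner_neg_right, neg_sub]
  have hlim : Tendsto (fun t : ℝ => ⟪M (v₀ + t • (w - v₀)), v₀ - w⟫) (𝓝[>] 0)
      (𝓝 ⟪M v₀, v₀ - w⟫) :=
    (hsegment.tendsto' 0 _ (by simp)).mono_left nhdsWithin_le_nhds
  exact le_of_tendsto hlim <| eventually_nhdsWithin_of_forall fun t (ht : 0 < t) =>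
    inner_le_liminf_of_monotone hmono hconv ha
      (hbounded w).bddAbove.isBoundedUnder_of_range.isCoboundedUnder_ge ht

theorem pseudomonotone_of_monotone {H : Type*} [NormedAddCommGroup H]
    [InnerProductSpace ℝ H] [CompleteSpace H]
    (M : H → H)
    (hmono : ∀ x y : H, 0 ≤ ⟪M x - M y, x - y⟫)
    (hhemi : ∀ x w : H, Continuous fun t : ℝ => ⟪M (x + t • w), w⟫)
    (hbdd : ∀ S : Set H, Bornology.IsBounded S → Bornology.IsBounded (M '' S))
    (v : ℕ → H) (v₀ : H) (hconv : WeakConv v v₀)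
    (hlimsup : Filter.limsup (fun n => ⟪M (v n), v n - v₀⟫) Filter.atTop ≤ 0) :
    ∀ w : H, ⟪M v₀, v₀ - w⟫ ≤ Filter.liminf (fun n => ⟪M (v n), v n - w⟫) Filter.atTop :=
  pseudomonotone_of_monotone_general M hmono hhemi hbdd v v₀ hconv hlimsup
end
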